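/- On T*ℝ² with canonical Poisson bracket {f,g} = Σ_{i=1,2} (∂f/∂p_i · ∂g/∂x_i − ∂f/∂x_i · ∂g/∂p_i), fix real constants a₁, a₂, a₃ and define H(p,x) = (1/2)p₁² + (1/2)(p₂ + a₁x₁ + a₂x₁²/2 + a₃x₁x₂)² and C(p,x) = a₃p₁ − a₂p₂ + a₁a₃x₂ + (a₃²/2)x₂². Then {C, H} = 0. -/

import Mathlib

/-!
Write `u = p₂ + a₁x₁ + a₂x₁²/2 + a₃x₁x₂`, so that `H = p₁²/2 + u²/2`. Since `C` does not depend
on `x₁`, it commutes with `p₁`, and `{C, H} = u {C, u}`. Finally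
`{C, u} = a₃ ∂u/∂x₁ - a₂ ∂u/∂x₂ - ∂C/∂x₂ = a₃(a₁ + a₂x₁ + a₃x₂) - a₂a₃x₁ - (a₁a₃ + a₃²x₂) = 0`.
-/

open Finset

/-- The canonical Poisson bracket on `T*ℝⁿ ≅ (ℝⁿ) × (ℝⁿ)` (first factor: momenta `p`,
second factor: positions `x`). -/
noncomputable def pbracket (n : ℕ) (f g : (Fin n → ℝ) × (Fin n → ℝ) → ℝ)
    (z : (Fin n → ℝ) × (Fin n → ℝ)) : ℝ :=
  ∑ i : Fin n,
    (fderiv ℝ f z (Pi.single i 1, 0) * fderiv ℝ g z (0, Pi.single i 1) -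
     fderiv ℝ f z (0, Pi.single i 1) * fderiv ℝ g z (Pi.single i 1, 0))

section PoissonBracket

variable {n : ℕ}

noncomputable def momentumCoord (i : Fin n) : (Fin n → ℝ) × (Fin n → ℝ) →L[ℝ] ℝ :=
  (ContinuousLinearMap.proj i).comp (ContinuousLinearMap.fst ℝ _ _)

noncomputable def positionCoord (i : Fin n) : (Fin n → ℝ) × (Fin n → ℝ) →L[ℝ] ℝ :=
  (ContinuousLinearMap.proj i).comp (ContinuousLinearMap.snd ℝ _ _)

@[simp]
theorem momentumCoord_apply (i : Fin n) (v : (Fin n → ℝ) × (Fin n → ℝ)) :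
    momentumCoord i v = v.1 i :=
  rfl

@[simp]
theorem positionCoord_apply (i : Fin n) (v : (Fin n → ℝ) × (Fin n → ℝ)) :
    positionCoord i v = v.2 i :=
  rfl

noncomputable def covector (ξ η : Fin n → ℝ) : (Fin n → ℝ) × (Fin n → ℝ) →L[ℝ] ℝ :=
  ∑ i, (ξ i • momentumCoord i + η i • positionCoord i)

@[simp]
theorem covector_apply (ξ η : Fin n → ℝ) (v : (Fin n → ℝ) × (Fin n → ℝ)) :
    covector ξ η v = ∑ i, (ξ i * v.1 i + η i * v.2 i) := by
  simp [covector]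

theorem hasFDerivAt_momentum (i : Fin n) (z : (Fin n → ℝ) × (Fin n → ℝ)) :
    HasFDerivAt (fun w : (Fin n → ℝ) × (Fin n → ℝ) => w.1 i) (momentumCoord i) z :=
  (momentumCoord i).hasFDerivAt

theorem hasFDerivAt_position (i : Fin n) (z : (Fin n → ℝ) × (Fin n → ℝ)) :
    HasFDerivAt (fun w : (Fin n → ℝ) × (Fin n → ℝ) => w.2 i) (positionCoord i) z :=
  (positionCoord i).hasFDerivAt

theorem pbracket_eq_of_hasFDerivAt {f g : (Fin n → ℝ) × (Fin n → ℝ) → ℝ}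
    {z : (Fin n → ℝ) × (Fin n → ℝ)} {ξf ηf ξg ηg : Fin n → ℝ}
    (hf : HasFDerivAt f (covector ξf ηf) z) (hg : HasFDerivAt g (covector ξg ηg) z) :
    pbracket n f g z = ∑ i, (ξf i * ηg i - ηf i * ξg i) := by
  simp [pbracket, hf.fderiv, hg.fderiv, Pi.single_apply, sum_sub_distrib]

end PoissonBracket

section CartanF23

variable (a₁ a₂ a₃ : ℝ)

noncomputable def cartanCasimir (w : (Fin 2 → ℝ) × (Fin 2 → ℝ)) : ℝ :=
  a₃ * w.1 0 - a₂ * w.1 1 + a₁ * a₃ * w.2 1 + a₃ ^ 2 / 2 * (w.2 1) ^ 2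

noncomputable def cartanShiftedMomentum (w : (Fin 2 → ℝ) × (Fin 2 → ℝ)) : ℝ :=
  w.1 1 + a₁ * w.2 0 + a₂ * (w.2 0) ^ 2 / 2 + a₃ * w.2 0 * w.2 1

noncomputable def cartanHamiltonian (w : (Fin 2 → ℝ) × (Fin 2 → ℝ)) : ℝ :=
  1/2 * (w.1 0) ^ 2 + 1/2 * cartanShiftedMomentum a₁ a₂ a₃ w ^ 2

theorem hasFDerivAt_cartanCasimir (z : (Fin 2 → ℝ) × (Fin 2 → ℝ)) :
    HasFDerivAt (cartanCasimir a₁ a₂ a₃)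
      (covector ![a₃, -a₂] ![0, a₁ * a₃ + a₃ ^ 2 * z.2 1]) z := by
  have hx₂ := hasFDerivAt_position 1 z
  have h := ((((hasFDerivAt_momentum 0 z).const_mul a₃).sub
    ((hasFDerivAt_momentum 1 z).const_mul a₂)).add (hx₂.const_mul (a₁ * a₃))).add
    ((hx₂.pow 2).const_mul (a₃ ^ 2 / 2))
  refine h.congr_fderiv (ContinuousLinearMap.ext fun v => ?_)
  simp only [covector_apply, Fin.sum_univ_two, add_apply, sub_apply, smul_apply,
    momentumCoord_apply, positionCoord_apply, smul_eq_mul, nsmul_eq_mul, Matrix.cons_val_zero,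
    Matrix.cons_val_one, Matrix.cons_val_fin_one]
  ring

theorem hasFDerivAt_cartanShiftedMomentum (z : (Fin 2 → ℝ) × (Fin 2 → ℝ)) :
    HasFDerivAt (cartanShiftedMomentum a₁ a₂ a₃)
      (covector ![0, 1] ![a₁ + a₂ * z.2 0 + a₃ * z.2 1, a₃ * z.2 0]) z := by
  have hx₁ := hasFDerivAt_position 0 z
  have h := (((hasFDerivAt_momentum 1 z).add (hx₁.const_mul a₁)).add
    (((hx₁.pow 2).const_mul a₂).mul_const (2⁻¹ : ℝ))).add
    ((hx₁.const_mul a₃).mul (hasFDerivAt_position 1 z))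
  refine h.congr_fderiv (ContinuousLinearMap.ext fun v => ?_)
  simp only [covector_apply, Fin.sum_univ_two, add_apply, smul_apply, momentumCoord_apply,
    positionCoord_apply, smul_eq_mul, nsmul_eq_mul, Matrix.cons_val_zero, Matrix.cons_val_one,
    Matrix.cons_val_fin_one]
  ring

theorem hasFDerivAt_cartanHamiltonian (z : (Fin 2 → ℝ) × (Fin 2 → ℝ)) :
    HasFDerivAt (cartanHamiltonian a₁ a₂ a₃)
      (let u := cartanShiftedMomentum a₁ a₂ a₃ z
       covector ![z.1 0, u] ![u * (a₁ + a₂ * z.2 0 + a₃ * z.2 1), u * (a₃ * z.2 0)]) z := by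
  have h := (((hasFDerivAt_momentum 0 z).pow 2).const_mul (1/2 : ℝ)).add
    (((hasFDerivAt_cartanShiftedMomentum a₁ a₂ a₃ z).pow 2).const_mul (1/2 : ℝ))
  refine h.congr_fderiv (ContinuousLinearMap.ext fun v => ?_)
  simp only [covector_apply, Fin.sum_univ_two, add_apply, smul_apply, momentumCoord_apply,
    smul_eq_mul, nsmul_eq_mul, Matrix.cons_val_zero, Matrix.cons_val_one, Matrix.cons_val_fin_one]
  ring

end CartanF23

/-- For the reduced normal Hamiltonian of the Cartan group `F_{23}`,
`H = (1/2)p₁² + (1/2)(p₂ + a₁x₁ + a₂x₁²/2 + a₃x₁x₂)²`, the function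
`C = a₃p₁ - a₂p₂ + a₁a₃x₂ + (a₃²/2)x₂²` satisfies `{C, H} = 0`. -/
theorem stmt10 (a₁ a₂ a₃ : ℝ) :
    ∀ z : (Fin 2 → ℝ) × (Fin 2 → ℝ),
      pbracket 2
        (fun w => a₃ * w.1 0 - a₂ * w.1 1 + a₁ * a₃ * w.2 1 + a₃ ^ 2 / 2 * (w.2 1) ^ 2)
        (fun w => 1/2 * (w.1 0) ^ 2 +
          1/2 * (w.1 1 + a₁ * w.2 0 + a₂ * (w.2 0) ^ 2 / 2 + a₃ * w.2 0 * w.2 1) ^ 2)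
        z = 0 := by
  intro z
  change pbracket 2 (cartanCasimir a₁ a₂ a₃) (cartanHamiltonian a₁ a₂ a₃) z = 0
  rw [pbracket_eq_of_hasFDerivAt (hasFDerivAt_cartanCasimir a₁ a₂ a₃ z)
    (hasFDerivAt_cartanHamiltonian a₁ a₂ a₃ z)]
  simp only [Fin.sum_univ_two, Matrix.cons_val_zero, Matrix.cons_val_one, Matrix.cons_val_fin_one]
  ring
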